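/- arXiv:0706.4138 — 3 statements merged into one kernel-verified Lean document; each statement's English description precedes it below -/
import Mathlib

section
/- Let A and B be real m×n matrices. If the row space of A is orthogonal to the row space of B and the column space of A is orthogonal to the column space of B, then ‖A + B‖_* = ‖A‖_* + ‖B‖_*. -/
open Matrix

/-- The nuclear norm (sum of singular values) of a real matrix, as the trace of √(XᵀX). -/
noncomputable def nucNorm {m n : Type*} [Fintype m] [Fintype n] [DecidableEq n]
    (X : Matrix m n ℝ) : ℝ :=
  ((Matrix.posSemidef_conjTranspose_mul_self X).1.eigenvectorUnitary.1 *
    diagonal ((RCLike.ofReal : ℝ → ℝ) ∘ (√·) ∘ (Matrix.posSemidef_conjTranspose_mul_self X).1.eigenvalues) *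
    (star (Matrix.posSemidef_conjTranspose_mul_self X).1.eigenvectorUnitary : Matrix n n ℝ)).trace

open scoped MatrixOrder

/-! Orthogonality of the column spaces kills the cross terms, so
`(A + B)ᴴ(A + B) = AᴴA + BᴴB`, and orthogonality of the row spaces gives `(AᴴA)(BᴴB) = 0`.
Two positive semidefinite matrices with zero product have square roots with zero product,
so `√(AᴴA) + √(BᴴB)` is the positive square root of `AᴴA + BᴴB`; take traces. -/

theorem nucNorm_eq_trace_sqrt {m n : Type*} [Fintype m] [Fintype n] [DecidableEq n]
    (X : Matrix m n ℝ) : nucNorm X = (CFC.sqrt (Xᴴ * X)).trace := by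
  have hX := posSemidef_conjTranspose_mul_self X
  rw [CFC.sqrt_eq_real_sqrt _ hX.nonneg, cfcₙ_eq_cfc, hX.1.cfc_eq, IsHermitian.cfc,
    Unitary.conjStarAlgAut_apply]
  rfl

namespace Matrix

theorem mul_transpose_eq_zero_of_span_orthogonal {m n p : Type*} [Fintype n]
    {A : Matrix m n ℝ} {B : Matrix p n ℝ}
    (h : ∀ u ∈ Submodule.span ℝ (Set.range fun i => A i),
      ∀ v ∈ Submodule.span ℝ (Set.range fun j => B j), u ⬝ᵥ v = 0) :
    A * Bᵀ = 0 := by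
  ext i j
  exact h (A i) (Submodule.subset_span ⟨i, rfl⟩) (B j) (Submodule.subset_span ⟨j, rfl⟩)

theorem conjTranspose_mul_self_add_of_conjTranspose_mul_eq_zero {m n : Type*} [Fintype m]
    {R : Type*} [CommRing R] [StarRing R] {A B : Matrix m n R} (h : Aᴴ * B = 0) :
    (A + B)ᴴ * (A + B) = Aᴴ * A + Bᴴ * B := by
  have h' : Bᴴ * A = 0 := by
    simpa only [conjTranspose_mul, conjTranspose_conjTranspose, conjTranspose_zero]
      using congrArg conjTranspose h
  rw [conjTranspose_add, Matrix.add_mul, Matrix.mul_add, Matrix.mul_add, h, h', add_zero,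
    zero_add]

section Sqrt

open scoped ComplexOrder

variable {n 𝕜 : Type*} [Fintype n] [DecidableEq n] [RCLike 𝕜]

theorem sqrt_mul_sqrt_eq_zero_of_mul_eq_zero {a b : Matrix n n 𝕜} (ha : 0 ≤ a) (hb : 0 ≤ b)
    (hab : a * b = 0) : CFC.sqrt a * CFC.sqrt b = 0 := by
  have hS : (CFC.sqrt a)ᴴ = CFC.sqrt a := (CFC.sqrt_nonneg a).isSelfAdjoint
  have hT : (CFC.sqrt b)ᴴ = CFC.sqrt b := (CFC.sqrt_nonneg b).isSelfAdjoint
  have hSSTT : (CFC.sqrt a)ᴴ * CFC.sqrt a * ((CFC.sqrt b)ᴴ * CFC.sqrt b) = 0 := by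
    rw [hS, hT, CFC.sqrt_mul_sqrt_self a ha, CFC.sqrt_mul_sqrt_self b hb, hab]
  rwa [conjTranspose_mul_self_mul_eq_zero, mul_conjTranspose_mul_self_eq_zero, hT] at hSSTT

theorem sqrt_add_of_mul_eq_zero {a b : Matrix n n 𝕜} (ha : 0 ≤ a) (hb : 0 ≤ b)
    (hab : a * b = 0) : CFC.sqrt (a + b) = CFC.sqrt a + CFC.sqrt b := by
  have hST := sqrt_mul_sqrt_eq_zero_of_mul_eq_zero ha hb hab
  have hTS : CFC.sqrt b * CFC.sqrt a = 0 := by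
    simpa only [star_mul, (CFC.sqrt_nonneg a).isSelfAdjoint.star_eq,
      (CFC.sqrt_nonneg b).isSelfAdjoint.star_eq, star_zero] using congrArg star hST
  refine CFC.sqrt_unique ?_ (add_nonneg (CFC.sqrt_nonneg a) (CFC.sqrt_nonneg b))
  rw [add_mul, mul_add, mul_add, hST, hTS, CFC.sqrt_mul_sqrt_self a ha,
    CFC.sqrt_mul_sqrt_self b hb, add_zero, zero_add]

end Sqrt

end Matrix

/-- If the row space of `A` (the span of its rows) is orthogonal to the row space of `B`,
and the column space of `A` (the span of its columns, i.e. the rows of `Aᵀ`) is orthogonal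
to the column space of `B`, then the nuclear norm is additive. -/
theorem nucNorm_add_of_orthogonal_spaces (m n : ℕ) (A B : Matrix (Fin m) (Fin n) ℝ)
    (hrow : ∀ u ∈ Submodule.span ℝ (Set.range fun i => A i),
            ∀ v ∈ Submodule.span ℝ (Set.range fun i => B i), u ⬝ᵥ v = 0)
    (hcol : ∀ u ∈ Submodule.span ℝ (Set.range fun j => Aᵀ j),
            ∀ v ∈ Submodule.span ℝ (Set.range fun j => Bᵀ j), u ⬝ᵥ v = 0) :
    nucNorm (A + B) = nucNorm A + nucNorm B := by
  have hAB : A * Bᴴ = 0 := by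
    simpa only [conjTranspose_eq_transpose_of_trivial]
      using mul_transpose_eq_zero_of_span_orthogonal hrow
  have hAtB : Aᴴ * B = 0 := by
    simpa only [transpose_transpose, conjTranspose_eq_transpose_of_trivial]
      using mul_transpose_eq_zero_of_span_orthogonal hcol
  have hprod : Aᴴ * A * (Bᴴ * B) = 0 := by
    rw [Matrix.mul_assoc, ← Matrix.mul_assoc A, hAB, Matrix.zero_mul, Matrix.mul_zero]
  rw [nucNorm_eq_trace_sqrt, nucNorm_eq_trace_sqrt, nucNorm_eq_trace_sqrt,
    conjTranspose_mul_self_add_of_conjTranspose_mul_eq_zero hAtB,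
    sqrt_add_of_mul_eq_zero (posSemidef_conjTranspose_mul_self A).nonneg
      (posSemidef_conjTranspose_mul_self B).nonneg hprod, trace_add]
end

section
/- Let 𝒜 : ℝ^{m×n} → ℝ^p be a linear map, let r ≥ 1 be an integer, and let X₀ ∈ ℝ^{m×n} with rank(X₀) ≤ r and b = 𝒜(X₀). Suppose there is a constant δ with 0 ≤ δ < 1/10 such that (1−δ)‖X‖_F ≤ ‖𝒜(X)‖ ≤ (1+δ)‖X‖_F for all matrices X ∈ ℝ^{m×n} of rank at most 5r. Then X₀ is the unique minimizer of the nuclear norm ‖X‖_* over all X ∈ ℝ^{m×n} satisfying 𝒜(X) = b; that is, any X with 𝒜(X) = b and ‖X‖_* ≤ ‖X₀‖_* must equal X₀. -/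
open Matrix

/-- The Frobenius norm of a real matrix. -/
noncomputable def frobNorm {m n : Type*} [Fintype m] [Fintype n] (X : Matrix m n ℝ) : ℝ :=
  Real.sqrt (∑ i, ∑ j, X i j ^ 2)

/-!
Write `X = X₀ + R`. Compressing `R` to the orthogonal complements of the column and row spaces
of `X₀` splits `R = R₀ + Rc` with `rank R₀ ≤ 2r` and `Rc` orthogonal to `X₀` on both sides, so
`‖X₀ + Rc‖_* = ‖X₀‖_* + ‖Rc‖_*` and minimality of `X` gives `‖Rc‖_* ≤ ‖R₀‖_*`. Cut the singular
value decomposition of `Rc` into blocks `T₀, T₁, …` of `3r` consecutive singular values. Every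
singular value of `Tⱼ₊₁` is at most the mean of those of `Tⱼ`, hence
`√(3r) ∑ⱼ ‖Tⱼ₊₁‖_F ≤ ‖Rc‖_* ≤ ‖R₀‖_* ≤ √(2r) ‖R₀‖_F ≤ √(2r) ‖R₀ + T₀‖_F`.
All these matrices have rank at most `5r` and `𝒜 (R₀ + T₀) = -∑ⱼ 𝒜 Tⱼ₊₁`, so the restricted
isometry property gives `√3 (1 - δ) ‖R₀ + T₀‖_F ≤ √2 (1 + δ) ‖R₀ + T₀‖_F`. As
`3 (1 - δ)² - 2 (1 + δ)² = 1 - 10δ + δ² > 0` for `δ < 1/10`, this forces `R₀ + T₀ = 0`; then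
`R₀ = 0` and `Rc = 0`.

The nuclear norm is computed from any compact singular value decomposition
`A = ∑ σᵢ uᵢ vᵢᵀ`: then `√(AᵀA) = ∑ σᵢ vᵢ vᵢᵀ`, so `‖A‖_* = ∑ σᵢ`. Its triangle inequality comes
from the duality bound `∑ⱼ pⱼᵀ A qⱼ ≤ ∑ σᵢ` for orthonormal families `p`, `q`.
-/

open Finset

namespace NuclearNormRecovery

variable {m n : Type*} [Fintype m] [Fintype n]

lemma frobNorm_sq (A : Matrix m n ℝ) : frobNorm A ^ 2 = (Aᵀ * A).trace := by
  rw [frobNorm, Real.sq_sqrt (by positivity), Finset.sum_comm]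
  simp [Matrix.trace, Matrix.mul_apply, sq]

lemma frobNorm_nonneg (A : Matrix m n ℝ) : 0 ≤ frobNorm A := Real.sqrt_nonneg _

lemma frobNorm_eq_zero {A : Matrix m n ℝ} : frobNorm A = 0 ↔ A = 0 := by
  rw [frobNorm, Real.sqrt_eq_zero (by positivity),
    Finset.sum_eq_zero_iff_of_nonneg (fun _ _ => by positivity)]
  simp_rw [Finset.sum_eq_zero_iff_of_nonneg (fun _ _ => sq_nonneg _), Finset.mem_univ,
    true_imp_iff, sq_eq_zero_iff, ← Matrix.ext_iff]
  rfl

lemma frobNorm_le_frobNorm_add {A B : Matrix m n ℝ} (h : (Aᵀ * B).trace = 0) :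
    frobNorm A ≤ frobNorm (A + B) := by
  have hBA : (Bᵀ * A).trace = 0 := by rw [← Matrix.trace_transpose]; simpa using h
  have hsq : frobNorm (A + B) ^ 2 = frobNorm A ^ 2 + frobNorm B ^ 2 := by
    simp only [frobNorm_sq, Matrix.transpose_add, Matrix.add_mul, Matrix.mul_add,
      Matrix.trace_add, h, hBA]
    ring
  refine (pow_le_pow_iff_left₀ (frobNorm_nonneg A) (frobNorm_nonneg _) two_ne_zero).1 ?_
  nlinarith [sq_nonneg (frobNorm B)]

lemma rank_add_le {m n : Type*} [Fintype n] (A B : Matrix m n ℝ) :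
    (A + B).rank ≤ A.rank + B.rank := by
  have h := LinearMap.rank_add_le A.mulVecLin B.mulVecLin
  rw [← Matrix.mulVecLin_add] at h
  simp only [LinearMap.rank, ← Module.finrank_eq_rank] at h
  exact_mod_cast h

lemma rank_sum_le {m n ι : Type*} [Fintype n] (s : Finset ι) (f : ι → Matrix m n ℝ) :
    (∑ i ∈ s, f i).rank ≤ ∑ i ∈ s, (f i).rank :=
  Finset.sum_hom_rel (r := fun (A : Matrix m n ℝ) k => A.rank ≤ k) (by simp)
    fun _ _ _ h => (rank_add_le _ _).trans (by omega)

lemma rank_sum_vecMulVec_le {m n ι : Type*} [Fintype n] (s : Finset ι) (x : ι → m → ℝ)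
    (y : ι → n → ℝ) : (∑ i ∈ s, vecMulVec (x i) (y i)).rank ≤ #s := by
  rw [Finset.card_eq_sum_ones]
  exact (rank_sum_le _ _).trans (Finset.sum_le_sum fun i _ => rank_vecMulVec_le _ _)

lemma dotProduct_sum_vecMulVec_mulVec {α : Type*} (s : Finset α) (σ : α → ℝ)
    (u : α → m → ℝ) (v : α → n → ℝ) (x : m → ℝ) (y : n → ℝ) :
    x ⬝ᵥ ((∑ i ∈ s, σ i • vecMulVec (u i) (v i)) *ᵥ y) =
      ∑ i ∈ s, σ i * ((x ⬝ᵥ u i) * (v i ⬝ᵥ y)) := by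
  simp [Matrix.sum_mulVec, dotProduct_sum, vecMulVec_mulVec, Matrix.smul_mulVec, mul_comm]

variable {ι κ : Type*} [DecidableEq ι] [DecidableEq κ]

def OrthonormalOn {k : Type*} [Fintype k] (s : Finset ι) (u : ι → k → ℝ) : Prop :=
  ∀ i ∈ s, ∀ j ∈ s, u i ⬝ᵥ u j = if i = j then 1 else 0

namespace OrthonormalOn

variable {k : Type*} [Fintype k]

lemma mono {s t : Finset ι} {u : ι → k → ℝ} (h : OrthonormalOn s u) (hts : t ⊆ s) :
    OrthonormalOn t u :=
  fun i hi j hj => h i (hts hi) j (hts hj)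

lemma disjSum {s : Finset ι} {t : Finset κ} {u : ι → k → ℝ} {p : κ → k → ℝ}
    (hu : OrthonormalOn s u) (hp : OrthonormalOn t p) (h : ∀ i ∈ s, ∀ j ∈ t, u i ⬝ᵥ p j = 0) :
    OrthonormalOn (s.disjSum t) (Sum.elim u p) := by
  rintro (i | i) hi (j | j) hj <;>
    simp only [Finset.inl_mem_disjSum, Finset.inr_mem_disjSum] at hi hj
  · simpa using hu i hi j hj
  · simpa using h i hi j hj
  · simpa [dotProduct_comm] using h j hj i hi
  · simpa using hp i hi j hj

lemma sum_dotProduct_sq_le {t : Finset ι} {p : ι → k → ℝ} (hp : OrthonormalOn t p)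
    (x : k → ℝ) : ∑ j ∈ t, (p j ⬝ᵥ x) ^ 2 ≤ x ⬝ᵥ x := by
  have hON : Orthonormal ℝ fun j : t => (WithLp.toLp 2 (p j) : EuclideanSpace ℝ k) := by
    rw [orthonormal_iff_ite]
    rintro ⟨i, hi⟩ ⟨j, hj⟩
    simp [EuclideanSpace.inner_toLp_toLp, hp j hj i hi, eq_comm]
  have := hON.sum_inner_products_le (WithLp.toLp 2 x : EuclideanSpace ℝ k) (s := univ)
  rw [← real_inner_self_eq_norm_sq, EuclideanSpace.inner_toLp_toLp, star_trivial] at this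
  rw [← Finset.sum_coe_sort t]
  simpa [EuclideanSpace.inner_toLp_toLp, dotProduct_comm] using this

lemma sum_dotProduct_mul_dotProduct_le_one {l : Type*} [Fintype l] {t : Finset ι}
    {p : ι → k → ℝ} {q : ι → l → ℝ} (hp : OrthonormalOn t p) (hq : OrthonormalOn t q)
    {x : k → ℝ} {y : l → ℝ} (hx : x ⬝ᵥ x = 1) (hy : y ⬝ᵥ y = 1) :
    ∑ j ∈ t, (p j ⬝ᵥ x) * (q j ⬝ᵥ y) ≤ 1 := by
  have hcs := Finset.sum_mul_sq_le_sq_mul_sq t (fun j => p j ⬝ᵥ x) (fun j => q j ⬝ᵥ y)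
  have hpx := hx ▸ hp.sum_dotProduct_sq_le x
  have hqy := hy ▸ hq.sum_dotProduct_sq_le y
  nlinarith [Finset.sum_nonneg fun j (_ : j ∈ t) => sq_nonneg (p j ⬝ᵥ x),
    Finset.sum_nonneg fun j (_ : j ∈ t) => sq_nonneg (q j ⬝ᵥ y)]

end OrthonormalOn

lemma sum_vecMulVec_mul_sum_vecMulVec {l k o : Type*} [Fintype k] {s : Finset ι}
    (a b : ι → ℝ) (x : ι → l → ℝ) (y : ι → k → ℝ) (z : ι → o → ℝ) (hy : OrthonormalOn s y) :
    (∑ i ∈ s, a i • vecMulVec (x i) (y i)) * (∑ j ∈ s, b j • vecMulVec (y j) (z j)) =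
      ∑ i ∈ s, (a i * b i) • vecMulVec (x i) (z i) := by
  simp_rw [Matrix.sum_mul, Matrix.mul_sum, Matrix.smul_mul, Matrix.mul_smul,
    vecMulVec_mul_vecMulVec]
  refine Finset.sum_congr rfl fun i hi => ?_
  rw [Finset.sum_eq_single_of_mem i hi fun j hj hji => by
    ext; simp [hy i hi j hj, hji.symm, vecMulVec_apply]]
  rw [hy i hi i hi, if_pos rfl, one_smul, smul_smul]

open scoped MatrixOrder in
lemma nucNorm_eq_trace_sqrt [DecidableEq n] (A : Matrix m n ℝ) :
    nucNorm A = (CFC.sqrt (Aᵀ * A)).trace := by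
  have hA := posSemidef_conjTranspose_mul_self A
  rw [← conjTranspose_eq_transpose_of_trivial, CFC.sqrt_eq_real_sqrt _ hA.nonneg, cfcₙ_eq_cfc,
    IsHermitian.cfc_eq hA.1]
  rfl

structure IsSVD (A : Matrix m n ℝ) (s : Finset ι) (σ : ι → ℝ) (u : ι → m → ℝ)
    (v : ι → n → ℝ) : Prop where
  pos : ∀ i ∈ s, 0 < σ i
  orthonormal_left : OrthonormalOn s u
  orthonormal_right : OrthonormalOn s v
  eq_sum : A = ∑ i ∈ s, σ i • vecMulVec (u i) (v i)

namespace IsSVD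

variable {A B : Matrix m n ℝ} {s : Finset ι} {σ : ι → ℝ} {u : ι → m → ℝ} {v : ι → n → ℝ}
  {t : Finset κ} {τ : κ → ℝ} {p : κ → m → ℝ} {q : κ → n → ℝ}

lemma transpose (h : IsSVD A s σ u v) : IsSVD Aᵀ s σ v u where
  pos := h.pos
  orthonormal_left := h.orthonormal_right
  orthonormal_right := h.orthonormal_left
  eq_sum := by
    simp_rw [h.eq_sum, Matrix.transpose_sum, Matrix.transpose_smul, transpose_vecMulVec]

lemma subset (h : IsSVD A s σ u v) {t : Finset ι} (hts : t ⊆ s) :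
    IsSVD (∑ i ∈ t, σ i • vecMulVec (u i) (v i)) t σ u v where
  pos i hi := h.pos i (hts hi)
  orthonormal_left := h.orthonormal_left.mono hts
  orthonormal_right := h.orthonormal_right.mono hts
  eq_sum := rfl

lemma neg (h : IsSVD A s σ u v) : IsSVD (-A) s σ (fun i => -u i) v where
  pos := h.pos
  orthonormal_left i hi j hj := by
    rw [neg_dotProduct, dotProduct_neg, neg_neg, h.orthonormal_left i hi j hj]
  orthonormal_right := h.orthonormal_right
  eq_sum := by simp [h.eq_sum, neg_vecMulVec]

lemma mulVec_right (h : IsSVD A s σ u v) {i : ι} (hi : i ∈ s) : A *ᵥ v i = σ i • u i := by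
  rw [h.eq_sum, Matrix.sum_mulVec, Finset.sum_eq_single_of_mem i hi]
  · rw [Matrix.smul_mulVec, vecMulVec_mulVec, h.orthonormal_right i hi i hi, if_pos rfl]
    simp
  · intro j hj hji
    rw [Matrix.smul_mulVec, vecMulVec_mulVec, h.orthonormal_right j hj i hi, if_neg hji]
    simp

lemma mulVec_left_eq_zero {k : Type*} [Fintype k] (h : IsSVD A s σ u v) {M : Matrix k m ℝ}
    (hM : M * A = 0) {i : ι} (hi : i ∈ s) : M *ᵥ u i = 0 := by
  have : σ i • M *ᵥ u i = 0 := by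
    rw [← Matrix.mulVec_smul, ← h.mulVec_right hi, Matrix.mulVec_mulVec, hM, Matrix.zero_mulVec]
  exact (smul_eq_zero.1 this).resolve_left (h.pos i hi).ne'

lemma mul_eq_zero_of_mulVec_left {k : Type*} [Fintype k] (h : IsSVD A s σ u v)
    {M : Matrix k m ℝ} (hM : ∀ i ∈ s, M *ᵥ u i = 0) : M * A = 0 := by
  rw [h.eq_sum, Matrix.mul_sum]
  refine Finset.sum_eq_zero fun i hi => ?_
  rw [Matrix.mul_smul, mul_vecMulVec, hM i hi, zero_vecMulVec, smul_zero]

lemma dotProduct_eq_zero (hA : IsSVD A s σ u v) (hB : IsSVD B t τ p q) (hAB : Aᵀ * B = 0)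
    {i : ι} (hi : i ∈ s) {j : κ} (hj : j ∈ t) : u i ⬝ᵥ p j = 0 := by
  have : σ i * (u i ⬝ᵥ p j) = 0 := by
    rw [← smul_eq_mul, ← smul_dotProduct, ← hA.mulVec_right hi, dotProduct_comm,
      dotProduct_mulVec, ← mulVec_transpose, hB.mulVec_left_eq_zero hAB hj, zero_dotProduct]
  exact (mul_eq_zero.1 this).resolve_left (hA.pos i hi).ne'

lemma disjSum (hA : IsSVD A s σ u v) (hB : IsSVD B t τ p q) (h₁ : Aᵀ * B = 0)
    (h₂ : A * Bᵀ = 0) :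
    IsSVD (A + B) (s.disjSum t) (Sum.elim σ τ) (Sum.elim u p) (Sum.elim v q) where
  pos := by
    rintro (i | i) hi <;> simp only [Finset.inl_mem_disjSum, Finset.inr_mem_disjSum] at hi
    · exact hA.pos i hi
    · exact hB.pos i hi
  orthonormal_left := hA.orthonormal_left.disjSum hB.orthonormal_left
    fun i hi j hj => hA.dotProduct_eq_zero hB h₁ hi hj
  orthonormal_right := hA.orthonormal_right.disjSum hB.orthonormal_right
    fun i hi j hj => hA.transpose.dotProduct_eq_zero hB.transpose (by simpa using h₂) hi hj
  eq_sum := by rw [Finset.sum_disjSum, hA.eq_sum, hB.eq_sum]; simp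

lemma rank_le (h : IsSVD A s σ u v) : A.rank ≤ #s := by
  simpa only [h.eq_sum, smul_vecMulVec] using rank_sum_vecMulVec_le s (fun i => σ i • u i) v

lemma transpose_mul_self (h : IsSVD A s σ u v) :
    Aᵀ * A = ∑ i ∈ s, (σ i * σ i) • vecMulVec (v i) (v i) := by
  conv_lhs => rw [h.transpose.eq_sum, h.eq_sum]
  exact sum_vecMulVec_mul_sum_vecMulVec _ _ _ _ _ h.orthonormal_left

lemma frobNorm_sq (h : IsSVD A s σ u v) : frobNorm A ^ 2 = ∑ i ∈ s, σ i ^ 2 := by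
  rw [NuclearNormRecovery.frobNorm_sq, h.transpose_mul_self, Matrix.trace_sum]
  refine Finset.sum_congr rfl fun i hi => ?_
  rw [Matrix.trace_smul, trace_vecMulVec, h.orthonormal_right i hi i hi, if_pos rfl]
  simp [sq]

open scoped MatrixOrder in
lemma sqrt_transpose_mul_self [DecidableEq n] (h : IsSVD A s σ u v) :
    CFC.sqrt (Aᵀ * A) = ∑ i ∈ s, σ i • vecMulVec (v i) (v i) := by
  refine CFC.sqrt_unique ?_ (PosSemidef.nonneg ?_)
  · rw [sum_vecMulVec_mul_sum_vecMulVec _ _ _ _ _ h.orthonormal_right, h.transpose_mul_self]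
  · exact posSemidef_sum _ fun i hi =>
      (posSemidef_vecMulVec_self_star (v i)).smul (h.pos i hi).le

lemma nucNorm_eq [DecidableEq n] (h : IsSVD A s σ u v) : nucNorm A = ∑ i ∈ s, σ i := by
  rw [nucNorm_eq_trace_sqrt, h.sqrt_transpose_mul_self, Matrix.trace_sum]
  refine Finset.sum_congr rfl fun i hi => ?_
  rw [Matrix.trace_smul, trace_vecMulVec, h.orthonormal_right i hi i hi, if_pos rfl, smul_eq_mul,
    mul_one]

lemma sum_dotProduct_mulVec_self (h : IsSVD A s σ u v) :
    ∑ i ∈ s, u i ⬝ᵥ (A *ᵥ v i) = ∑ i ∈ s, σ i := by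
  refine Finset.sum_congr rfl fun i hi => ?_
  rw [h.mulVec_right hi, dotProduct_smul, h.orthonormal_left i hi i hi, if_pos rfl, smul_eq_mul,
    mul_one]

lemma sum_dotProduct_mulVec_le (h : IsSVD A s σ u v) (hp : OrthonormalOn t p)
    (hq : OrthonormalOn t q) : ∑ j ∈ t, p j ⬝ᵥ (A *ᵥ q j) ≤ ∑ i ∈ s, σ i := by
  simp_rw [h.eq_sum, dotProduct_sum_vecMulVec_mulVec]
  rw [Finset.sum_comm]
  refine Finset.sum_le_sum fun i hi => ?_
  rw [← Finset.mul_sum]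
  refine mul_le_of_le_one_right (h.pos i hi).le ?_
  simp_rw [dotProduct_comm (v i)]
  exact hp.sum_dotProduct_mul_dotProduct_le_one hq
    (by simpa using h.orthonormal_left i hi i hi) (by simpa using h.orthonormal_right i hi i hi)

lemma exists_projection (h : IsSVD A s σ u v) :
    ∃ P : Matrix m m ℝ, Pᵀ = P ∧ P * A = A ∧ P.rank ≤ #s ∧
      ∀ N : Matrix m n ℝ, Aᵀ * N = 0 → P * N = 0 := by
  refine ⟨∑ i ∈ s, vecMulVec (u i) (u i), ?_, ?_, rank_sum_vecMulVec_le _ _ _, fun N hN => ?_⟩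
  · simp [Matrix.transpose_sum, transpose_vecMulVec]
  · conv_rhs => rw [h.eq_sum]
    rw [Matrix.sum_mul]
    refine Finset.sum_congr rfl fun i hi => ?_
    rw [vecMulVec_mul, ← mulVec_transpose, h.transpose.mulVec_right hi, vecMulVec_smul]
  · have hNA : Nᵀ * A = 0 := by
      rw [← transpose_transpose A, ← transpose_mul, hN, transpose_zero]
    rw [Matrix.sum_mul]
    refine Finset.sum_eq_zero fun i hi => ?_
    rw [vecMulVec_mul, ← mulVec_transpose, h.mulVec_left_eq_zero hNA hi]
    ext; simp [vecMulVec_apply]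

end IsSVD

open Module in
lemma exists_rightSingularVectors [DecidableEq n] (A : Matrix m n ℝ) :
    ∃ (N : ℕ) (v : ℕ → n → ℝ), OrthonormalOn (range N) v ∧
      (∀ i ∈ range N, ∀ j ∈ range N, (A *ᵥ v i) ⬝ᵥ (A *ᵥ v j) =
        if i = j then (toEuclideanLin A).singularValues i ^ 2 else 0) ∧
      A = ∑ i ∈ range N, vecMulVec (A *ᵥ v i) (v i) := by
  set T := toEuclideanLin A
  have hT := T.isSymmetric_adjoint_comp_self
  set N := finrank ℝ (EuclideanSpace ℝ n)
  set b := hT.eigenvectorBasis (rfl : finrank ℝ _ = N)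
  let v : ℕ → n → ℝ := fun i => if h : i < N then (b ⟨i, h⟩).ofLp else 0
  refine ⟨N, v, fun i hi j hj => ?_, fun i hi j hj => ?_, ?_⟩
  · simp only [Finset.mem_range] at hi hj
    have := orthonormal_iff_ite.1 b.orthonormal ⟨i, hi⟩ ⟨j, hj⟩
    rw [EuclideanSpace.inner_eq_star_dotProduct] at this
    simpa [v, hi, hj, dotProduct_comm, Fin.ext_iff] using this
  · simp only [Finset.mem_range] at hi hj
    have hinner : (A *ᵥ v i) ⬝ᵥ (A *ᵥ v j) =
        inner ℝ (b ⟨j, hj⟩) ((LinearMap.adjoint T ∘ₗ T) (b ⟨i, hi⟩)) := by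
      rw [LinearMap.comp_apply, LinearMap.adjoint_inner_right,
        EuclideanSpace.inner_eq_star_dotProduct]
      simp [v, hi, hj, T, toLpLin_apply]
    rw [hinner, hT.apply_eigenvectorBasis, inner_smul_right, ← T.sq_singularValues_of_lt rfl hi]
    change _ * inner ℝ (b ⟨j, hj⟩) (b ⟨i, hi⟩) = _
    rw [orthonormal_iff_ite.1 b.orthonormal]
    simp [Fin.ext_iff, eq_comm]
  · refine Matrix.ext_iff_mulVec.2 fun x => ?_
    have hx : ∑ i ∈ range N, (v i ⬝ᵥ x) • v i = x := by
      rw [Finset.sum_range]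
      have := congrArg WithLp.ofLp (b.sum_repr' (WithLp.toLp 2 x))
      simpa [v, EuclideanSpace.inner_eq_star_dotProduct, dotProduct_comm] using this
    conv_lhs => rw [← hx]
    simp [Matrix.sum_mulVec, vecMulVec_mulVec, Matrix.mulVec_sum, Matrix.mulVec_smul]

lemma exists_isSVD [DecidableEq n] (A : Matrix m n ℝ) :
    ∃ (σ : ℕ → ℝ) (u : ℕ → m → ℝ) (v : ℕ → n → ℝ),
      IsSVD A (range A.rank) σ u v ∧ Antitone σ := by
  obtain ⟨N, v, hv, hAv, hsum⟩ := exists_rightSingularVectors A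
  set T := toEuclideanLin A
  set σ : ℕ → ℝ := ⇑T.singularValues
  have hrank : A.rank = Module.finrank ℝ (LinearMap.range T) :=
    A.rank_eq_finrank_range_toLin (PiLp.basisFun 2 ℝ m) (PiLp.basisFun 2 ℝ n)
  have hpos : ∀ i ∈ range A.rank, 0 < σ i := fun i hi =>
    T.singularValues_pos_iff_lt_finrank_range.2 (hrank ▸ Finset.mem_range.1 hi)
  have hzero : ∀ i ∈ range N, i ∉ range A.rank → A *ᵥ v i = 0 := by
    intro i hi hir
    have hσ : σ i = 0 := T.singularValues_eq_zero_iff_le_finrank_range.2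
      (hrank ▸ not_lt.1 (Finset.mem_range.not.1 hir))
    have := hAv i hi i hi
    rwa [if_pos rfl, hσ, sq, mul_zero, dotProduct_self_eq_zero] at this
  have hsub : range A.rank ⊆ range N := Finset.range_subset_range.2 <| by
    simpa [← hsum] using rank_sum_vecMulVec_le (range N) (fun i => A *ᵥ v i) v
  refine ⟨σ, fun i => (σ i)⁻¹ • (A *ᵥ v i), v, ⟨hpos, fun i hi j hj => ?_, hv.mono hsub, ?_⟩,
    T.singularValues_antitone⟩
  · rw [smul_dotProduct, dotProduct_smul, hAv i (hsub hi) j (hsub hj)]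
    split_ifs with hij
    · subst hij
      rw [smul_eq_mul, smul_eq_mul]
      field_simp [(hpos i hi).ne']
    · simp
  · conv_lhs => rw [hsum]
    rw [← Finset.sum_subset hsub fun i hi hir => by rw [hzero i hi hir, zero_vecMulVec]]
    refine Finset.sum_congr rfl fun i hi => ?_
    rw [smul_vecMulVec, smul_smul, mul_inv_cancel₀ (hpos i hi).ne', one_smul]

section NuclearNorm

variable [DecidableEq n]

lemma nucNorm_nonneg (A : Matrix m n ℝ) : 0 ≤ nucNorm A := by
  obtain ⟨σ, u, v, h, -⟩ := exists_isSVD A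
  rw [h.nucNorm_eq]
  exact Finset.sum_nonneg fun i hi => (h.pos i hi).le

lemma nucNorm_zero : nucNorm (0 : Matrix m n ℝ) = 0 := by
  have h : IsSVD (0 : Matrix m n ℝ) (∅ : Finset ℕ) 0 0 0 :=
    ⟨by simp, by simp [OrthonormalOn], by simp [OrthonormalOn], by simp⟩
  simpa using h.nucNorm_eq

lemma nucNorm_neg (A : Matrix m n ℝ) : nucNorm (-A) = nucNorm A := by
  obtain ⟨σ, u, v, h, -⟩ := exists_isSVD A
  rw [h.neg.nucNorm_eq, h.nucNorm_eq]

lemma eq_zero_of_nucNorm_nonpos {A : Matrix m n ℝ} (hA : nucNorm A ≤ 0) : A = 0 := by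
  obtain ⟨σ, u, v, h, -⟩ := exists_isSVD A
  rw [h.nucNorm_eq] at hA
  have hempty : range A.rank = ∅ := by
    by_contra hne
    exact (Finset.sum_pos h.pos (Finset.nonempty_iff_ne_empty.2 hne)).not_ge hA
  rw [h.eq_sum, hempty, Finset.sum_empty]

lemma nucNorm_le_sqrt_rank_mul_frobNorm (A : Matrix m n ℝ) :
    nucNorm A ≤ √A.rank * frobNorm A := by
  obtain ⟨σ, u, v, h, -⟩ := exists_isSVD A
  rw [h.nucNorm_eq, ← Real.sqrt_sq (frobNorm_nonneg A), h.frobNorm_sq,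
    ← Real.sqrt_mul (Nat.cast_nonneg _)]
  refine Real.le_sqrt_of_sq_le ?_
  simpa using sq_sum_le_card_mul_sum_sq (s := range A.rank) (f := σ)

lemma nucNorm_add_le (A B : Matrix m n ℝ) : nucNorm (A + B) ≤ nucNorm A + nucNorm B := by
  obtain ⟨τ, p, q, hAB, -⟩ := exists_isSVD (A + B)
  obtain ⟨σ, u, v, hA, -⟩ := exists_isSVD A
  obtain ⟨σ', u', v', hB, -⟩ := exists_isSVD B
  rw [hAB.nucNorm_eq, ← hAB.sum_dotProduct_mulVec_self, hA.nucNorm_eq, hB.nucNorm_eq]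
  simp_rw [Matrix.add_mulVec, dotProduct_add, Finset.sum_add_distrib]
  exact add_le_add (hA.sum_dotProduct_mulVec_le hAB.orthonormal_left hAB.orthonormal_right)
    (hB.sum_dotProduct_mulVec_le hAB.orthonormal_left hAB.orthonormal_right)

lemma nucNorm_add_eq {A B : Matrix m n ℝ} (h₁ : Aᵀ * B = 0) (h₂ : A * Bᵀ = 0) :
    nucNorm (A + B) = nucNorm A + nucNorm B := by
  obtain ⟨σ, u, v, hA, -⟩ := exists_isSVD A
  obtain ⟨τ, p, q, hB, -⟩ := exists_isSVD B
  rw [(hA.disjSum hB h₁ h₂).nucNorm_eq, Finset.sum_disjSum, hA.nucNorm_eq, hB.nucNorm_eq]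
  simp

lemma nucNorm_le_of_nucNorm_add_le {A B₁ B₂ : Matrix m n ℝ} (h₁ : Aᵀ * B₂ = 0)
    (h₂ : A * B₂ᵀ = 0) (h : nucNorm (A + (B₁ + B₂)) ≤ nucNorm A) : nucNorm B₂ ≤ nucNorm B₁ := by
  have := nucNorm_add_le (A + (B₁ + B₂)) (-B₁)
  rw [nucNorm_neg, show A + (B₁ + B₂) + -B₁ = A + B₂ by abel, nucNorm_add_eq h₁ h₂] at this
  linarith

end NuclearNorm

lemma exists_lowRank_add_orthogonal [DecidableEq n] (A B : Matrix m n ℝ) :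
    ∃ B₁ B₂ : Matrix m n ℝ, B = B₁ + B₂ ∧ B₁.rank ≤ 2 * A.rank ∧ Aᵀ * B₂ = 0 ∧ A * B₂ᵀ = 0 ∧
      ∀ N : Matrix m n ℝ, Aᵀ * N = 0 → A * Nᵀ = 0 → (B₁ᵀ * N).trace = 0 := by
  classical
  obtain ⟨σ, u, v, h, -⟩ := exists_isSVD A
  -- the orthogonal projections onto the column space and the row space of `A`
  obtain ⟨P, hPt, hPA, hPrank, hPN⟩ := h.exists_projection
  obtain ⟨Q, hQt, hQA, hQrank, hQN⟩ := h.transpose.exists_projection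
  have hAP : Aᵀ * (1 - P) = 0 := by
    rw [Matrix.mul_sub, ← hPt, ← transpose_mul, hPA, Matrix.mul_one, sub_self]
  have hAQ : A * (1 - Q) = 0 := by
    rw [Matrix.mul_sub, ← hQt, ← transpose_transpose A, ← transpose_mul, hQA, Matrix.mul_one,
      transpose_transpose, sub_self]
  refine ⟨P * B + (1 - P) * B * Q, (1 - P) * B * (1 - Q), ?_, ?_, ?_, ?_, fun N hN₁ hN₂ => ?_⟩
  · simp only [Matrix.sub_mul, Matrix.mul_sub, Matrix.one_mul, Matrix.mul_one]
    abel
  · calc _ ≤ (P * B).rank + ((1 - P) * B * Q).rank := rank_add_le _ _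
      _ ≤ P.rank + Q.rank := add_le_add (rank_mul_le_left _ _) (rank_mul_le_right _ _)
      _ ≤ 2 * A.rank := by simp only [Finset.card_range] at hPrank hQrank; omega
  · rw [← Matrix.mul_assoc, ← Matrix.mul_assoc, hAP, Matrix.zero_mul, Matrix.zero_mul]
  · rw [transpose_mul, transpose_sub, transpose_one, hQt, ← Matrix.mul_assoc, hAQ,
      Matrix.zero_mul]
  · have hNQ : N * Q = 0 := by
      rw [← hQt, ← transpose_transpose N, ← transpose_mul, hQN Nᵀ (by simpa using hN₂),
        transpose_zero]
    rw [transpose_add, Matrix.add_mul, trace_add, transpose_mul, Matrix.mul_assoc, hPt,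
      hPN N hN₁, Matrix.mul_zero, trace_zero, zero_add, transpose_mul, hQt, Matrix.mul_assoc,
      trace_mul_comm, Matrix.mul_assoc, hNQ, Matrix.mul_zero, trace_zero]

def indexBlock (ρ k j : ℕ) : Finset ℕ := (range ρ).filter (· / k = j)

lemma card_indexBlock_le (ρ : ℕ) {k : ℕ} (hk : 0 < k) (j : ℕ) : #(indexBlock ρ k j) ≤ k :=
  calc #(indexBlock ρ k j) ≤ #(Ico (j * k) (j * k + k)) := Finset.card_le_card fun i hi => by
        simp only [indexBlock, Finset.mem_filter, Finset.mem_range, Nat.div_eq_iff hk,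
          Finset.mem_Ico] at hi ⊢
        omega
    _ = k := by simp

lemma card_indexBlock_of_nonempty {ρ k j : ℕ} (hk : 0 < k)
    (h : (indexBlock ρ k (j + 1)).Nonempty) : #(indexBlock ρ k j) = k := by
  obtain ⟨i, hi⟩ := h
  have : indexBlock ρ k j = Ico (j * k) (j * k + k) := by
    ext l
    simp only [indexBlock, Finset.mem_filter, Finset.mem_range, Nat.div_eq_iff hk,
      Finset.mem_Ico, add_mul, one_mul] at hi ⊢
    omega
  simp [this]

lemma le_of_mem_indexBlock_succ {ρ k j i l : ℕ} (hi : i ∈ indexBlock ρ k (j + 1))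
    (hl : l ∈ indexBlock ρ k j) : l ≤ i := by
  simp only [indexBlock, Finset.mem_filter] at hi hl
  exact (Nat.lt_of_div_lt_div (c := k) (by omega)).le

lemma sum_sum_indexBlock {M : Type*} [AddCommMonoid M] (ρ k : ℕ) (f : ℕ → M) :
    ∑ j ∈ range (ρ + 1), ∑ i ∈ indexBlock ρ k j, f i = ∑ i ∈ range ρ, f i :=
  Finset.sum_fiberwise_of_maps_to (fun i hi => by
    simp only [Finset.mem_range] at hi ⊢
    exact (Nat.div_le_self i k).trans_lt (by omega)) f

lemma card_mul_sum_sq_le_sq_sum {α β : Type*} {T : Finset α} {S : Finset β} {f : α → ℝ}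
    {g : β → ℝ} (hf : ∀ i ∈ T, 0 ≤ f i) (hfg : ∀ i ∈ T, ∀ l ∈ S, f i ≤ g l) (hcard : #T ≤ #S) :
    #S * ∑ i ∈ T, f i ^ 2 ≤ (∑ l ∈ S, g l) ^ 2 := by
  rcases (#S).eq_zero_or_pos with hS | hS
  · simp [hS, sq_nonneg]
  have hfS : ∀ i ∈ T, #S * f i ≤ ∑ l ∈ S, g l := fun i hi => by
    simpa using Finset.card_nsmul_le_sum S g (f i) (hfg i hi)
  have key : (#S : ℝ) * (#S * ∑ i ∈ T, f i ^ 2) ≤ #S * (∑ l ∈ S, g l) ^ 2 :=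
    calc (#S : ℝ) * (#S * ∑ i ∈ T, f i ^ 2) = ∑ i ∈ T, (#S * f i) ^ 2 := by
          rw [← mul_assoc, Finset.mul_sum]
          exact Finset.sum_congr rfl fun i _ => by ring
      _ ≤ ∑ i ∈ T, (∑ l ∈ S, g l) ^ 2 := Finset.sum_le_sum fun i hi =>
          pow_le_pow_left₀ (mul_nonneg (Nat.cast_nonneg _) (hf i hi)) (hfS i hi) 2
      _ ≤ #S * (∑ l ∈ S, g l) ^ 2 := by
          rw [Finset.sum_const, nsmul_eq_mul]
          exact mul_le_mul_of_nonneg_right (by exact_mod_cast hcard) (sq_nonneg _)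
  exact le_of_mul_le_mul_left key (by exact_mod_cast hS)

lemma sqrt_card_mul_frobNorm_le_nucNorm [DecidableEq n] {B C : Matrix m n ℝ} {t : Finset ι}
    {s : Finset κ} {σ : ι → ℝ} {τ : κ → ℝ} {u : ι → m → ℝ} {v : ι → n → ℝ} {p : κ → m → ℝ}
    {q : κ → n → ℝ} (hB : IsSVD B t σ u v) (hC : IsSVD C s τ p q)
    (hle : ∀ i ∈ t, ∀ l ∈ s, σ i ≤ τ l) (hcard : #t ≤ #s) :
    √(#s : ℝ) * frobNorm B ≤ nucNorm C := by
  rw [hC.nucNorm_eq]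
  refine (pow_le_pow_iff_left₀ (mul_nonneg (Real.sqrt_nonneg _) (frobNorm_nonneg B))
    (Finset.sum_nonneg fun l hl => (hC.pos l hl).le) two_ne_zero).1 ?_
  rw [mul_pow, Real.sq_sqrt (Nat.cast_nonneg _), hB.frobNorm_sq]
  exact card_mul_sum_sq_le_sq_sum (fun i hi => (hB.pos i hi).le) hle hcard

lemma exists_svd_blocks [DecidableEq n] (R : Matrix m n ℝ) {k : ℕ} (hk : 0 < k) :
    ∃ (J : ℕ) (T : ℕ → Matrix m n ℝ), R = ∑ j ∈ range (J + 1), T j ∧ (∀ j, (T j).rank ≤ k) ∧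
      √(k : ℝ) * ∑ j ∈ range J, frobNorm (T (j + 1)) ≤ nucNorm R ∧
      ∀ j (A : Matrix m n ℝ), Aᵀ * R = 0 → A * Rᵀ = 0 → Aᵀ * T j = 0 ∧ A * (T j)ᵀ = 0 := by
  obtain ⟨τ, p, q, hR, hanti⟩ := exists_isSVD R
  set ρ := R.rank
  set T : ℕ → Matrix m n ℝ := fun j => ∑ i ∈ indexBlock ρ k j, τ i • vecMulVec (p i) (q i)
  have hT : ∀ j, IsSVD (T j) (indexBlock ρ k j) τ p q :=
    fun j => hR.subset (Finset.filter_subset _ _)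
  have hstep : ∀ j, √(k : ℝ) * frobNorm (T (j + 1)) ≤ nucNorm (T j) := by
    intro j
    rcases (indexBlock ρ k (j + 1)).eq_empty_or_nonempty with hempty | hne
    · rw [show T (j + 1) = 0 by simp [T, hempty], frobNorm_eq_zero.2 rfl, mul_zero]
      exact nucNorm_nonneg _
    · have hcard := card_indexBlock_of_nonempty hk hne
      have := sqrt_card_mul_frobNorm_le_nucNorm (hT (j + 1)) (hT j)
        (fun i hi l hl => hanti (le_of_mem_indexBlock_succ hi hl))
        (by rw [hcard]; exact card_indexBlock_le ρ hk _)
      rwa [hcard] at this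
  refine ⟨ρ, T, ?_, fun j => (hT j).rank_le.trans (card_indexBlock_le ρ hk j), ?_,
    fun j A hAR hRA => ⟨?_, ?_⟩⟩
  · conv_lhs => rw [hR.eq_sum]
    exact (sum_sum_indexBlock ρ k _).symm
  · calc √(k : ℝ) * ∑ j ∈ range ρ, frobNorm (T (j + 1))
        ≤ ∑ j ∈ range ρ, nucNorm (T j) := by
          rw [Finset.mul_sum]
          exact Finset.sum_le_sum fun j _ => hstep j
      _ ≤ ∑ j ∈ range (ρ + 1), nucNorm (T j) :=
          Finset.sum_le_sum_of_subset_of_nonneg (Finset.range_subset_range.2 ρ.le_succ)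
            fun j _ _ => nucNorm_nonneg _
      _ = nucNorm R := by
          simp_rw [fun j => (hT j).nucNorm_eq]
          rw [sum_sum_indexBlock, hR.nucNorm_eq]
  · exact (hT j).mul_eq_zero_of_mulVec_left fun i hi =>
      hR.mulVec_left_eq_zero hAR (Finset.filter_subset _ _ hi)
  · exact (hT j).transpose.mul_eq_zero_of_mulVec_left fun i hi =>
      hR.transpose.mulVec_left_eq_zero hRA (Finset.filter_subset _ _ hi)

lemma exists_head_tail_of_nucNorm_add_le [DecidableEq n] {X₀ R : Matrix m n ℝ} {r : ℕ}
    (hr : 0 < r) (hX₀ : X₀.rank ≤ r) (hR : nucNorm (X₀ + R) ≤ nucNorm X₀) :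
    ∃ (H : Matrix m n ℝ) (J : ℕ) (T : ℕ → Matrix m n ℝ), R = H + ∑ j ∈ range J, T j ∧
      H.rank ≤ 5 * r ∧ (∀ j, (T j).rank ≤ 3 * r) ∧
      √(3 * r : ℝ) * ∑ j ∈ range J, frobNorm (T j) ≤ √(2 * r : ℝ) * frobNorm H ∧
      (H = 0 → R = 0) := by
  obtain ⟨R₀, Rc, hsplit, hrank₀, hRc₁, hRc₂, horth⟩ := exists_lowRank_add_orthogonal X₀ R
  have hcone : nucNorm Rc ≤ nucNorm R₀ := nucNorm_le_of_nucNorm_add_le hRc₁ hRc₂ (hsplit ▸ hR)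
  obtain ⟨J, T, hRc, hrankT, htail, hT⟩ := exists_svd_blocks Rc (k := 3 * r) (by omega)
  obtain ⟨hT₁, hT₂⟩ := hT 0 X₀ hRc₁ hRc₂
  have hfrob : frobNorm R₀ ≤ frobNorm (R₀ + T 0) := frobNorm_le_frobNorm_add (horth _ hT₁ hT₂)
  refine ⟨R₀ + T 0, J, fun j => T (j + 1), ?_, (rank_add_le _ _).trans ?_,
    fun j => hrankT (j + 1), ?_, fun hH => ?_⟩
  · rw [hsplit, hRc, Finset.sum_range_succ', add_comm _ (T 0), add_assoc]
  · linarith [hrankT 0]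
  · calc √(3 * r : ℝ) * ∑ j ∈ range J, frobNorm (T (j + 1)) ≤ nucNorm R₀ := by
          push_cast at htail
          linarith
      _ ≤ √(R₀.rank : ℝ) * frobNorm R₀ := nucNorm_le_sqrt_rank_mul_frobNorm R₀
      _ ≤ √(2 * r : ℝ) * frobNorm (R₀ + T 0) :=
          mul_le_mul (Real.sqrt_le_sqrt (by exact_mod_cast hrank₀.trans (by omega))) hfrob
            (frobNorm_nonneg _) (Real.sqrt_nonneg _)
  · have hR₀ : R₀ = 0 := frobNorm_eq_zero.1 <| le_antisymm
      (hfrob.trans_eq (by rw [hH, frobNorm_eq_zero.2 rfl])) (frobNorm_nonneg _)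
    have hRc : Rc = 0 := eq_zero_of_nucNorm_nonpos (by rwa [hR₀, nucNorm_zero] at hcone)
    rw [hsplit, hR₀, hRc, add_zero]

def IsRestrictedIsometry {E : Type*} [NormedAddCommGroup E] [Module ℝ E]
    (𝒜 : Matrix m n ℝ →ₗ[ℝ] E) (K : ℕ) (δ : ℝ) : Prop :=
  ∀ X : Matrix m n ℝ, X.rank ≤ K → (1 - δ) * frobNorm X ≤ ‖𝒜 X‖ ∧ ‖𝒜 X‖ ≤ (1 + δ) * frobNorm X

lemma IsRestrictedIsometry.eq_zero_of_map_add_sum_eq_zero {E : Type*} [NormedAddCommGroup E]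
    [Module ℝ E] {𝒜 : Matrix m n ℝ →ₗ[ℝ] E} {K : ℕ} {δ a b : ℝ}
    (h𝒜 : IsRestrictedIsometry 𝒜 K δ) (hδ : 0 ≤ 1 + δ) (ha : 0 ≤ a)
    (hab : (1 + δ) * b < (1 - δ) * a) {α : Type*} {s : Finset α} {H : Matrix m n ℝ}
    {T : α → Matrix m n ℝ} (hH : H.rank ≤ K) (hT : ∀ j, (T j).rank ≤ K)
    (htail : a * ∑ j ∈ s, frobNorm (T j) ≤ b * frobNorm H) (hzero : 𝒜 (H + ∑ j ∈ s, T j) = 0) :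
    H = 0 := by
  have hnorm : ‖𝒜 H‖ ≤ (1 + δ) * ∑ j ∈ s, frobNorm (T j) := by
    rw [map_add, add_eq_zero_iff_eq_neg] at hzero
    rw [hzero, norm_neg, map_sum, Finset.mul_sum]
    exact (norm_sum_le _ _).trans (Finset.sum_le_sum fun j _ => (h𝒜 (T j) (hT j)).2)
  have : ((1 - δ) * a - (1 + δ) * b) * frobNorm H ≤ 0 := by
    nlinarith [(h𝒜 H hH).1, mul_le_mul_of_nonneg_left hnorm ha,
      mul_le_mul_of_nonneg_left htail hδ]
  exact frobNorm_eq_zero.1 (le_antisymm (nonpos_of_mul_nonpos_right this (by linarith))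
    (frobNorm_nonneg H))

lemma one_add_mul_sqrt_two_mul_lt {δ : ℝ} (hδ : δ < 1 / 10) {r : ℝ} (hr : 0 < r) :
    (1 + δ) * √(2 * r) < (1 - δ) * √(3 * r) := by
  refine lt_of_pow_lt_pow_left₀ 2 (mul_nonneg (by linarith) (Real.sqrt_nonneg _)) ?_
  rw [mul_pow, mul_pow, Real.sq_sqrt (by positivity), Real.sq_sqrt (by positivity)]
  nlinarith [sq_nonneg δ]

end NuclearNormRecovery

open NuclearNormRecovery

/-- If the restricted isometry property holds at rank 5r with constant δ < 1/10, then X₀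
is the unique nuclear norm minimizer subject to 𝒜(X) = b: any feasible X with nuclear
norm at most that of X₀ equals X₀. -/
theorem nucNorm_min_recovers_of_rip (m n p r : ℕ) (hr : 1 ≤ r)
    (𝒜 : Matrix (Fin m) (Fin n) ℝ →ₗ[ℝ] EuclideanSpace ℝ (Fin p))
    (X₀ : Matrix (Fin m) (Fin n) ℝ) (hX₀ : X₀.rank ≤ r)
    (b : EuclideanSpace ℝ (Fin p)) (hb : 𝒜 X₀ = b)
    (δ : ℝ) (hδ0 : 0 ≤ δ) (hδ1 : δ < 1 / 10)
    (hRIP : ∀ X : Matrix (Fin m) (Fin n) ℝ, X.rank ≤ 5 * r →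
      (1 - δ) * frobNorm X ≤ ‖𝒜 X‖ ∧ ‖𝒜 X‖ ≤ (1 + δ) * frobNorm X) :
    ∀ X : Matrix (Fin m) (Fin n) ℝ, 𝒜 X = b → nucNorm X ≤ nucNorm X₀ → X = X₀ := by
  intro X hXb hXnuc
  obtain ⟨H, J, T, hR, hH, hT, htail, hzero⟩ :=
    exists_head_tail_of_nucNorm_add_le (R := X - X₀) hr hX₀ (by rwa [add_sub_cancel])
  have h𝒜 : 𝒜 (H + ∑ j ∈ range J, T j) = 0 := by rw [← hR, map_sub, hXb, hb, sub_self]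
  rw [← sub_eq_zero]
  exact hzero (IsRestrictedIsometry.eq_zero_of_map_add_sum_eq_zero hRIP (by linarith)
    (Real.sqrt_nonneg _) (one_add_mul_sqrt_two_mul_lt hδ1 (Nat.cast_pos.2 hr)) hH
    (fun j => (hT j).trans (by omega)) htail h𝒜)
end

section
/- Let 𝒜 : ℝ^{m×n} → ℝ^p be a linear map with adjoint 𝒜*, let b ∈ ℝ^p, and suppose L* ∈ ℝ^{m×r}, R* ∈ ℝ^{n×r}, y* ∈ ℝ^p satisfy: L* = 𝒜*(y*)·R*, R* = 𝒜*(y*)'·L*, 𝒜(L*·R*') = b, and the operator norm ‖𝒜*(y*)‖ ≤ 1. Then X* := L*·R*' minimizes the nuclear norm over the feasible set: for every X ∈ ℝ^{m×n} with 𝒜(X) = b, one has ‖X*‖_* ≤ ‖X‖_*; moreover ‖X*‖_* = (‖L*‖_F² + ‖R*‖_F²)/2 = b'y*. -/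
open Matrix

/-- The operator norm (largest singular value / induced 2-norm) of a real matrix. -/
noncomputable def opNorm {m n : Type*} [Fintype m] [Fintype n] [DecidableEq n]
    (X : Matrix m n ℝ) : ℝ :=
  ‖LinearMap.toContinuousLinearMap (Matrix.toEuclideanLin X)‖

/-!
At a stationary point, `L = Y R` and `R = Yᵀ L` with `Y = 𝒜*(y*)` give `Lᵀ L = Rᵀ R`, hence
`X*ᵀ X* = R (Lᵀ L) Rᵀ = (R Rᵀ)²`. By uniqueness of positive semidefinite square roots,
`‖X*‖_* = tr (R Rᵀ) = ‖R‖_F² = ‖L‖_F²`, and `b ⬝ᵥ y* = tr (X*ᵀ Y) = tr (R Lᵀ Y) = tr (R Rᵀ)` as well.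
Optimality is weak duality: evaluating `tr (Xᵀ Y)` in an orthonormal eigenbasis `vᵢ` of `Xᵀ X` and
applying Cauchy–Schwarz to each `⟪X vᵢ, Y vᵢ⟫` gives `tr (Xᵀ Y) ≤ ‖Y‖ ‖X‖_*`, so every feasible `X`
satisfies `‖X*‖_* = b ⬝ᵥ y* = tr (Xᵀ Y) ≤ ‖X‖_*`.
-/

open scoped InnerProductSpace

lemma trace_eq_sum_inner_toEuclideanLin {n ι : Type*} [Fintype n] [DecidableEq n] [Fintype ι]
    (A : Matrix n n ℝ) (v : OrthonormalBasis ι ℝ (EuclideanSpace ℝ n)) :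
    A.trace = ∑ i, ⟪v i, toEuclideanLin A (v i)⟫_ℝ := by
  rw [← LinearMap.trace_eq_sum_inner, toEuclideanLin_eq_toLin_orthonormal, trace_toLin_eq]

lemma inner_toEuclideanLin_transpose_mul {m n : Type*} [Fintype m] [Fintype n] [DecidableEq n]
    (X Y : Matrix m n ℝ) (v : EuclideanSpace ℝ n) :
    ⟪v, toEuclideanLin (Xᵀ * Y) v⟫_ℝ = ⟪toEuclideanLin X v, toEuclideanLin Y v⟫_ℝ := by
  classical
  rw [← conjTranspose_eq_transpose_of_trivial, toLpLin_mul_same, LinearMap.comp_apply,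
    toEuclideanLin_conjTranspose_eq_adjoint, LinearMap.adjoint_inner_right]

lemma norm_toEuclideanLin_eigenvectorBasis_sq {m n : Type*} [Fintype m] [Fintype n]
    [DecidableEq n] (X : Matrix m n ℝ) (i : n) :
    ‖toEuclideanLin X ((posSemidef_conjTranspose_mul_self X).1.eigenvectorBasis i)‖ ^ 2 =
      (posSemidef_conjTranspose_mul_self X).1.eigenvalues i := by
  set hH := (posSemidef_conjTranspose_mul_self X).1
  have hv : toEuclideanLin (Xᴴ * X) (hH.eigenvectorBasis i) =
      hH.eigenvalues i • hH.eigenvectorBasis i := by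
    rw [toLpLin_apply, hH.mulVec_eigenvectorBasis]; rfl
  rw [← real_inner_self_eq_norm_sq, ← inner_toEuclideanLin_transpose_mul,
    ← conjTranspose_eq_transpose_of_trivial, hv, real_inner_smul_right, real_inner_self_eq_norm_sq,
    hH.eigenvectorBasis.orthonormal.1 i, one_pow, mul_one]

lemma nucNorm_eq_sum_sqrt_eigenvalues {m n : Type*} [Fintype m] [Fintype n] [DecidableEq n]
    (X : Matrix m n ℝ) :
    nucNorm X = ∑ i, √((posSemidef_conjTranspose_mul_self X).1.eigenvalues i) := by
  rw [nucNorm, trace_mul_cycle, Unitary.coe_star_mul_self, one_mul, trace_diagonal]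
  rfl

lemma nucNorm_nonneg {m n : Type*} [Fintype m] [Fintype n] [DecidableEq n]
    (X : Matrix m n ℝ) : 0 ≤ nucNorm X := by
  rw [nucNorm_eq_sum_sqrt_eigenvalues]
  positivity

lemma norm_toEuclideanLin_apply_le {m n : Type*} [Fintype m] [Fintype n] [DecidableEq n]
    (Y : Matrix m n ℝ) (v : EuclideanSpace ℝ n) : ‖toEuclideanLin Y v‖ ≤ opNorm Y * ‖v‖ :=
  (LinearMap.toContinuousLinearMap (toEuclideanLin Y)).le_opNorm v

theorem trace_transpose_mul_le_opNorm_mul_nucNorm {m n : Type*} [Fintype m] [Fintype n]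
    [DecidableEq n] (X Y : Matrix m n ℝ) :
    (Xᵀ * Y).trace ≤ opNorm Y * nucNorm X := by
  set v := (posSemidef_conjTranspose_mul_self X).1.eigenvectorBasis
  rw [trace_eq_sum_inner_toEuclideanLin _ v, nucNorm_eq_sum_sqrt_eigenvalues, Finset.mul_sum]
  refine Finset.sum_le_sum fun i _ => ?_
  have hXv : ‖toEuclideanLin X (v i)‖ =
      √((posSemidef_conjTranspose_mul_self X).1.eigenvalues i) := by
    rw [← norm_toEuclideanLin_eigenvectorBasis_sq, Real.sqrt_sq (norm_nonneg _)]
  calc ⟪v i, toEuclideanLin (Xᵀ * Y) (v i)⟫_ℝ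
      = ⟪toEuclideanLin X (v i), toEuclideanLin Y (v i)⟫_ℝ :=
        inner_toEuclideanLin_transpose_mul X Y (v i)
    _ ≤ ‖toEuclideanLin X (v i)‖ * ‖toEuclideanLin Y (v i)‖ := real_inner_le_norm _ _
    _ ≤ ‖toEuclideanLin X (v i)‖ * opNorm Y := by
        gcongr
        simpa [v.orthonormal.1 i] using norm_toEuclideanLin_apply_le Y (v i)
    _ = _ := by rw [hXv, mul_comm]

-- `nucNorm X` unfolds to `cfc √ (Xᴴ X)`, the unique positive semidefinite square root of `Xᴴ X`.
open scoped MatrixOrder in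
lemma nucNorm_eq_trace_of_sq_eq {m n : Type*} [Fintype m] [Fintype n] [DecidableEq n]
    (X : Matrix m n ℝ) {B : Matrix n n ℝ} (hB : B.PosSemidef) (h : B ^ 2 = Xᴴ * X) :
    nucNorm X = B.trace := by
  have hA := posSemidef_conjTranspose_mul_self X
  have hcfc : cfc Real.sqrt (Xᴴ * X) = (hA.1.eigenvectorUnitary : Matrix n n ℝ) *
      diagonal ((RCLike.ofReal : ℝ → ℝ) ∘ (√·) ∘ hA.1.eigenvalues) *
      (star hA.1.eigenvectorUnitary : Matrix n n ℝ) := by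
    rw [IsHermitian.cfc_eq hA.1, IsHermitian.cfc]; rfl
  rw [nucNorm, ← hcfc, ← cfcₙ_eq_cfc (hf := Real.continuous_sqrt.continuousOn)
    (hf0 := Real.sqrt_zero), ← CFC.sqrt_eq_real_sqrt _ hA.nonneg,
    CFC.sqrt_unique (by rw [← sq, h]) hB.nonneg]

lemma frobNorm_sq_eq_trace_mul_transpose {m n : Type*} [Fintype m] [Fintype n]
    (M : Matrix m n ℝ) : frobNorm M ^ 2 = (M * Mᵀ).trace := by
  rw [frobNorm, Real.sq_sqrt (by positivity)]
  simp [trace, mul_apply, sq]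

lemma frobNorm_sq_eq_trace_transpose_mul {m n : Type*} [Fintype m] [Fintype n]
    (M : Matrix m n ℝ) : frobNorm M ^ 2 = (Mᵀ * M).trace := by
  rw [frobNorm_sq_eq_trace_mul_transpose, trace_mul_comm]

lemma transpose_mul_eq_transpose_of_eq_transpose_mul {m n r : Type*} [Fintype m]
    {Y : Matrix m n ℝ} {L : Matrix m r ℝ} {R : Matrix n r ℝ} (hR : R = Yᵀ * L) :
    Lᵀ * Y = Rᵀ := by
  rw [hR, transpose_mul, transpose_transpose]

section Stationary

variable {m n r : Type*} [Fintype m] [Fintype n]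
  {Y : Matrix m n ℝ} {L : Matrix m r ℝ} {R : Matrix n r ℝ}

lemma transpose_mul_self_eq_of_stationary (hL : L = Y * R) (hR : R = Yᵀ * L) :
    Lᵀ * L = Rᵀ * R := by
  nth_rewrite 2 [hL]
  rw [← Matrix.mul_assoc, transpose_mul_eq_transpose_of_eq_transpose_mul hR]

lemma frobNorm_sq_eq_of_stationary [Fintype r] (hL : L = Y * R) (hR : R = Yᵀ * L) :
    frobNorm L ^ 2 = frobNorm R ^ 2 := by
  rw [frobNorm_sq_eq_trace_transpose_mul, frobNorm_sq_eq_trace_transpose_mul,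
    transpose_mul_self_eq_of_stationary hL hR]

lemma trace_transpose_mul_transpose_mul_eq_of_stationary [Fintype r] (hR : R = Yᵀ * L) :
    ((L * Rᵀ)ᵀ * Y).trace = frobNorm R ^ 2 := by
  rw [transpose_mul, transpose_transpose, Matrix.mul_assoc,
    transpose_mul_eq_transpose_of_eq_transpose_mul hR, frobNorm_sq_eq_trace_mul_transpose]

lemma nucNorm_mul_transpose_of_stationary [Fintype r] [DecidableEq n] (hL : L = Y * R)
    (hR : R = Yᵀ * L) :
    nucNorm (L * Rᵀ) = frobNorm R ^ 2 := by
  have hsq : (R * Rᵀ) ^ 2 = (L * Rᵀ)ᴴ * (L * Rᵀ) := by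
    rw [conjTranspose_eq_transpose_of_trivial, transpose_mul, transpose_transpose, sq,
      Matrix.mul_assoc, Matrix.mul_assoc, ← Matrix.mul_assoc Lᵀ,
      transpose_mul_self_eq_of_stationary hL hR, ← Matrix.mul_assoc Rᵀ, ← Matrix.mul_assoc R]
  have hpsd : (R * Rᵀ).PosSemidef := by
    simpa only [conjTranspose_eq_transpose_of_trivial] using posSemidef_self_mul_conjTranspose R
  rw [nucNorm_eq_trace_of_sq_eq _ hpsd hsq, frobNorm_sq_eq_trace_mul_transpose]

end Stationary
/-- If (L*, R*, y*) is a stationary feasible point of the method of multipliers and the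
dual certificate 𝒜*(y*) has operator norm at most 1, then X* = L* R*ᵀ minimizes the
nuclear norm over {X : 𝒜(X) = b}, with ‖X*‖₊ = (‖L*‖_F² + ‖R*‖_F²)/2 = bᵀy*. -/
theorem stationary_point_optimal (m n p r : ℕ)
    (𝒜 : Matrix (Fin m) (Fin n) ℝ →ₗ[ℝ] (Fin p → ℝ))
    (𝒜s : (Fin p → ℝ) →ₗ[ℝ] Matrix (Fin m) (Fin n) ℝ)
    (hadj : ∀ (X : Matrix (Fin m) (Fin n) ℝ) (y : Fin p → ℝ),
      𝒜 X ⬝ᵥ y = (Xᵀ * 𝒜s y).trace)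
    (b : Fin p → ℝ)
    (Lstar : Matrix (Fin m) (Fin r) ℝ) (Rstar : Matrix (Fin n) (Fin r) ℝ)
    (ystar : Fin p → ℝ)
    (hL : Lstar = 𝒜s ystar * Rstar) (hR : Rstar = (𝒜s ystar)ᵀ * Lstar)
    (hfeas : 𝒜 (Lstar * Rstarᵀ) = b)
    (hdual : opNorm (𝒜s ystar) ≤ 1) :
    (∀ X : Matrix (Fin m) (Fin n) ℝ, 𝒜 X = b →
      nucNorm (Lstar * Rstarᵀ) ≤ nucNorm X) ∧
    nucNorm (Lstar * Rstarᵀ) = (frobNorm Lstar ^ 2 + frobNorm Rstar ^ 2) / 2 ∧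
    nucNorm (Lstar * Rstarᵀ) = b ⬝ᵥ ystar := by
  have hnuc := nucNorm_mul_transpose_of_stationary hL hR
  have hbY : b ⬝ᵥ ystar = frobNorm Rstar ^ 2 := by
    rw [← hfeas, hadj, trace_transpose_mul_transpose_mul_eq_of_stationary hR]
  refine ⟨fun X hX => ?_, by rw [hnuc, frobNorm_sq_eq_of_stationary hL hR]; ring,
    by rw [hnuc, hbY]⟩
  calc nucNorm (Lstar * Rstarᵀ) = b ⬝ᵥ ystar := by rw [hnuc, hbY]
    _ = (Xᵀ * 𝒜s ystar).trace := by rw [← hX, hadj]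
    _ ≤ opNorm (𝒜s ystar) * nucNorm X := trace_transpose_mul_le_opNorm_mul_nucNorm X _
    _ ≤ nucNorm X := mul_le_of_le_one_left (nucNorm_nonneg X) hdual
end
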